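/- arXiv:2109.14082 — 4 statements merged into one kernel-verified Lean document; each statement's English description precedes it below -/
import Mathlib

section
/- Suppose a warning function w has the following form: with probability γ it outputs φ(R), where R is the number of calibration scores exceeding the test score and φ: {0,...,T} → {0,1} is deterministic, and with probability 1-γ it outputs 1 (a warning). Assume R is uniformly distributed on {0,1,...,T} when the test point is unsafe. If the false negative rate P(w outputs 0 | unsafe) is at most ε, and φ outputs 0 on at least one input, and the false positive rate satisfies FPR ≥ 1-γ, then FPR ≥ 1 - (1+T)ε. -/
open Finset

/- Since `φ` vanishes somewhere, the false negative rate is at least `γ / (T + 1)`, so the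
bound `FNR ≤ ε` forces `γ ≤ (T + 1) ε`, and then `FPR ≥ 1 - γ ≥ 1 - (T + 1) ε`. -/

lemma le_mul_of_mul_card_div_le {ι : Type*} {s : Finset ι} (hs : s.Nonempty) {γ n ε : ℝ}
    (hγ : 0 ≤ γ) (hn : 0 < n) (h : γ * #s / n ≤ ε) : γ ≤ n * ε := by
  have hcard : (1 : ℝ) ≤ #s := by exact_mod_cast hs.card_pos
  calc γ ≤ γ * #s := le_mul_of_one_le_right hγ hcard
    _ ≤ n * ε := by rwa [div_le_iff₀ hn, mul_comm ε] at h

/-- Proposition 2 (core step): for a rank-based warning rule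
`w = φ(R)` with probability `γ`, `1` with probability `1-γ`, where `R` is
uniform on `{0,...,T}` under unsafety (so the false negative rate equals
`γ · #{r : φ r = 0} / (T+1)`): if the FNR is at most `ε`, `φ` outputs `0`
on at least one input, and `FPR ≥ 1 - γ`, then `FPR ≥ 1 - (1+T)ε`. -/
theorem stmt_3 (T : ℕ) (γ ε FNR FPR : ℝ)
    (hγ : γ ∈ Set.Icc (0:ℝ) 1)
    (φ : Fin (T + 1) → Bool)
    (hFNR : FNR = γ * ((Finset.univ.filter (fun r : Fin (T + 1) => φ r = false)).card : ℝ) / (T + 1))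
    (hFNRε : FNR ≤ ε)
    (hφ : ∃ r, φ r = false)
    (hFPR : FPR ≥ 1 - γ) :
    FPR ≥ 1 - (1 + T) * ε := by
  obtain ⟨r, hr⟩ := hφ
  have hzeros : (univ.filter (fun r : Fin (T + 1) => φ r = false)).Nonempty := ⟨r, by simp [hr]⟩
  have hγε : γ ≤ (T + 1) * ε :=
    le_mul_of_mul_card_div_le hzeros hγ.1 (by positivity) (hFNR ▸ hFNRε)
  linarith
end

section
/- Let T be a positive integer and ε > 0 with ε < 1/(1+T). Then for any rank-based warning rule of the form in Proposition 2 (randomized mixture with weight γ of a deterministic function of the uniform rank on {0,...,T}, and weight 1-γ of always warning) whose false negative rate is at most ε, the false positive rate is at least 1 - (1+T)ε > 0; in particular if ε = o(1/T) then FPR → 1 as T → ∞. -/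
open Finset

theorem le_card_mul_mul_card_filter_div {α : Type*} [Fintype α] {p : α → Prop}
    [DecidablePred p] (h : ∃ a, p a) {γ : ℝ} (hγ : 0 ≤ γ) :
    γ ≤ Fintype.card α * (γ * (univ.filter p).card / Fintype.card α) := by
  obtain ⟨a, ha⟩ := h
  have hcard : (0 : ℝ) < Fintype.card α := by
    exact_mod_cast Fintype.card_pos_iff.mpr ⟨a⟩
  have hfilter : (1 : ℝ) ≤ (univ.filter p).card := by
    exact_mod_cast card_pos.mpr ⟨a, mem_filter.mpr ⟨mem_univ a, ha⟩⟩
  rw [mul_div_cancel₀ _ hcard.ne']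
  exact le_mul_of_one_le_right hγ hfilter

theorem stmt_4_general (T : ℕ) (ε : ℝ) (hε : ε < 1 / (1 + (T : ℝ)))
    (γ FNR FPR : ℝ)
    (hγ : γ ∈ Set.Icc (0:ℝ) 1)
    (φ : Fin (T + 1) → Bool)
    (hFNR : FNR = γ * ((Finset.univ.filter (fun r : Fin (T + 1) => φ r = false)).card : ℝ) / (T + 1))
    (hFNRε : FNR ≤ ε)
    (hFPR₁ : (∃ r, φ r = false) → FPR ≥ 1 - γ)
    (hFPR₂ : (∀ r, φ r = true) → FPR = 1) :
    FPR ≥ 1 - (1 + (T : ℝ)) * ε ∧ 0 < 1 - (1 + (T : ℝ)) * ε := by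
  have hT : (0 : ℝ) < 1 + T := by positivity
  have hFNR₀ : 0 ≤ FNR := hFNR ▸ by have := hγ.1; positivity
  refine ⟨?_, by linarith [(lt_div_iff₀ hT).mp hε]⟩
  by_cases h : ∃ r, φ r = false
  · have hγFNR : γ ≤ (1 + T) * FNR := by
      simpa [hFNR, add_comm] using le_card_mul_mul_card_filter_div h hγ.1
    linarith [hFPR₁ h, mul_le_mul_of_nonneg_left hFNRε hT.le]
  · rw [hFPR₂ (by simpa using h)]
    nlinarith

/-- Proposition 2: for any rank-based warning rule (output `φ(R)` with
probability `γ`, where `R` is uniform on `{0,...,T}` for unsafe points, and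
output a warning with probability `1-γ`; with `FPR ≥ 1-γ` whenever `φ` is not
identically `1`, and `FPR = 1` if `φ ≡ 1`), if the false negative rate is at
most `ε < 1/(1+T)`, then `FPR ≥ 1 - (1+T)ε > 0`. -/
theorem stmt_4 (T : ℕ) (hT : 0 < T) (ε : ℝ) (hε0 : 0 < ε) (hε : ε < 1 / (1 + (T : ℝ)))
    (γ FNR FPR : ℝ)
    (hγ : γ ∈ Set.Icc (0:ℝ) 1)
    (φ : Fin (T + 1) → Bool)
    (hFNR : FNR = γ * ((Finset.univ.filter (fun r : Fin (T + 1) => φ r = false)).card : ℝ) / (T + 1))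
    (hFNRε : FNR ≤ ε)
    (hFPR₁ : (∃ r, φ r = false) → FPR ≥ 1 - γ)
    (hFPR₂ : (∀ r, φ r = true) → FPR = 1) :
    FPR ≥ 1 - (1 + (T : ℝ)) * ε ∧ 0 < 1 - (1 + (T : ℝ)) * ε :=
  stmt_4_general T ε hε γ FNR FPR hγ φ hFNR hFNRε hFPR₁ hFPR₂
end

section
/- Let X₁,...,X_{M+1} be exchangeable, almost surely distinct real-valued random variables and ε ∈ (0,1) with (1-ε)(M+1) ≥ 1. Define q = (#{i ≤ M : X_i < X_{M+1}} + 1)/(M+1). Then P(q ≤ 1-ε) ≥ 1 - ε - 1/(M+1) and P(q ≤ 1-ε) = ⌊(1-ε)(M+1)⌋/(M+1). -/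
open MeasureTheory Finset

noncomputable def rnk {n : ℕ} (v : Fin n → ℝ) (j : Fin n) : ℕ :=
  (Finset.univ.filter fun i => v i < v j).card

lemma rnk_measurable {n : ℕ} (j : Fin n) :
    Measurable (fun v : Fin n → ℝ => rnk v j) := by
  unfold rnk
  simp only [Finset.card_filter]
  exact Finset.measurable_sum _ (fun i _ => Measurable.ite
    (measurableSet_lt (measurable_pi_apply i) (measurable_pi_apply j))
    measurable_const measurable_const)

lemma rnk_lt {n : ℕ} (v : Fin n → ℝ) (j : Fin n) : rnk v j < n := by
  have : (Finset.univ.filter fun i => v i < v j) ⊆ Finset.univ.erase j := by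
    intro i hi
    simp only [mem_filter, mem_univ, true_and] at hi
    exact Finset.mem_erase.2 ⟨fun h => by simp [h] at hi, mem_univ i⟩
  calc rnk v j ≤ (Finset.univ.erase j).card := Finset.card_le_card this
    _ < n := by
        rw [Finset.card_erase_of_mem (mem_univ j), Finset.card_univ, Fintype.card_fin]
        have := j.pos; omega

lemma rnk_strictMonoOn {n : ℕ} {v : Fin n → ℝ} {a b : Fin n} (h : v a < v b) :
    rnk v a < rnk v b := by
  apply Finset.card_lt_card
  constructor
  · intro i hi
    simp only [mem_filter, mem_univ, true_and] at hi ⊢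
    exact hi.trans h
  · intro hsub
    have := hsub (Finset.mem_filter.2 ⟨mem_univ a, h⟩)
    simp at this

lemma rnk_inj {n : ℕ} {v : Fin n → ℝ} (hv : Function.Injective v) :
    Function.Injective (rnk v) := by
  intro a b hab
  rcases lt_trichotomy (v a) (v b) with h | h | h
  · exact absurd hab (Nat.ne_of_lt (rnk_strictMonoOn h))
  · exact hv h
  · exact absurd hab.symm (Nat.ne_of_lt (rnk_strictMonoOn h))

lemma rnk_surj {n : ℕ} {v : Fin n → ℝ} (hv : Function.Injective v) {k : ℕ} (hk : k < n) :
    ∃ j, rnk v j = k := by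
  have himg : (Finset.univ.image (rnk v)) ⊆ Finset.range n := by
    intro x hx
    simp only [mem_image, mem_univ, true_and] at hx
    obtain ⟨j, rfl⟩ := hx
    exact Finset.mem_range.2 (rnk_lt v j)
  have hcard : (Finset.univ.image (rnk v)).card = n := by
    rw [Finset.card_image_of_injective _ (rnk_inj hv), Finset.card_univ, Fintype.card_fin]
  have := Finset.eq_of_subset_of_card_le himg (by rw [hcard, Finset.card_range])
  have hk' : k ∈ Finset.univ.image (rnk v) := by rw [this]; exact Finset.mem_range.2 hk
  simpa using Finset.mem_image.1 hk'

lemma rnk_comp {n : ℕ} (v : Fin n → ℝ) (σ : Equiv.Perm (Fin n)) (j : Fin n) :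
    rnk (fun i => v (σ i)) j = rnk v (σ j) := by
  unfold rnk
  rw [Finset.card_filter, Finset.card_filter]
  exact Fintype.sum_equiv σ _ _ (fun i => rfl)

open scoped ENNReal

/-- For exchangeable a.s. distinct scores `X 0, ..., X M`, `ε ∈ (0,1)` with
`(1-ε)(M+1) ≥ 1`, and the conformal quantile
`q = (#{i < M : X i < X M} + 1)/(M+1)`, we have
`P(q ≤ 1-ε) = ⌊(1-ε)(M+1)⌋/(M+1)` and `P(q ≤ 1-ε) ≥ 1 - ε - 1/(M+1)`. -/
theorem stmt_9 {Ω : Type*} [MeasurableSpace Ω] (μ : Measure Ω) [IsProbabilityMeasure μ]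
    (M : ℕ) (hM : 0 < M) (ε : ℝ) (hε : ε ∈ Set.Ioo (0:ℝ) 1)
    (hq : (1 - ε) * (M + 1) ≥ 1)
    (X : Fin (M + 1) → Ω → ℝ)
    (hmeas : ∀ i, Measurable (X i))
    (hexch : ∀ σ : Equiv.Perm (Fin (M + 1)),
      Measure.map (fun ω => fun i => X (σ i) ω) μ = Measure.map (fun ω => fun i => X i ω) μ)
    (hdist : μ {ω | ∃ i j : Fin (M + 1), i ≠ j ∧ X i ω = X j ω} = 0) :
    μ {ω | (((Finset.univ.filter
          (fun i : Fin M => X i.castSucc ω < X (Fin.last M) ω)).card : ℝ) + 1) / (M + 1)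
            ≤ 1 - ε}
        = ENNReal.ofReal ((⌊(1 - ε) * ((M : ℝ) + 1)⌋ : ℝ) / (M + 1)) ∧
    μ {ω | (((Finset.univ.filter
          (fun i : Fin M => X i.castSucc ω < X (Fin.last M) ω)).card : ℝ) + 1) / (M + 1)
            ≤ 1 - ε}
        ≥ ENNReal.ofReal (1 - ε - 1 / (M + 1)) := by
  obtain ⟨hε0, hε1⟩ := hε
  set T : Ω → (Fin (M+1) → ℝ) := fun ω i => X i ω with hTdef
  have hTm : Measurable T := measurable_pi_lambda _ hmeas
  set ν : Measure (Fin (M+1) → ℝ) := μ.map T with hνdef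
  have hνp : IsProbabilityMeasure ν := Measure.isProbabilityMeasure_map hTm.aemeasurable
  set B : Fin (M+1) → ℕ → Set (Fin (M+1) → ℝ) := fun j k => {v | rnk v j = k} with hBdef
  have hBm : ∀ j k, MeasurableSet (B j k) := fun j k =>
    (rnk_measurable j) (measurableSet_singleton k)
  -- exchangeability: all rank distributions agree
  have hswap : ∀ (j : Fin (M+1)) (k : ℕ), ν (B j k) = ν (B (Fin.last M) k) := by
    intro j k
    set σ := Equiv.swap (Fin.last M) j with hσ
    have hg : Measurable (fun v : Fin (M+1) → ℝ => fun i => v (σ i)) :=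
      measurable_pi_lambda _ (fun i => measurable_pi_apply _)
    have hmap : ν.map (fun v => fun i => v (σ i)) = ν := by
      rw [hνdef, Measure.map_map hg hTm]
      exact hexch σ
    have hpre : (fun v : Fin (M+1) → ℝ => fun i => v (σ i)) ⁻¹' (B (Fin.last M) k) = B j k := by
      ext v
      simp only [hBdef, Set.mem_preimage, Set.mem_setOf_eq]
      rw [rnk_comp v σ (Fin.last M), hσ, Equiv.swap_apply_left]
    rw [← hpre, ← Measure.map_apply hg (hBm _ _), hmap]
  -- a.s. distinctness
  set D : Set (Fin (M+1) → ℝ) := {v | Function.Injective v} with hDdef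
  have hcomp : Dᶜ = {v : Fin (M+1) → ℝ | ∃ i j : Fin (M+1), i ≠ j ∧ v i = v j} := by
    ext v
    simp only [hDdef, Set.mem_compl_iff, Set.mem_setOf_eq, Function.Injective]
    push_neg
    constructor
    · rintro ⟨a, b, hab, hne⟩; exact ⟨a, b, hne, hab⟩
    · rintro ⟨a, b, hne, hab⟩; exact ⟨a, b, hab, hne⟩
  have hcompm : MeasurableSet Dᶜ := by
    rw [hcomp]
    have he : {v : Fin (M+1) → ℝ | ∃ i j : Fin (M+1), i ≠ j ∧ v i = v j}
        = ⋃ i, ⋃ j, ⋃ (_ : i ≠ j), {v : Fin (M+1) → ℝ | v i = v j} := by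
      ext v; simp [Set.mem_iUnion]
    rw [he]
    exact MeasurableSet.iUnion fun i => MeasurableSet.iUnion fun j =>
      MeasurableSet.iUnion fun _ =>
        measurableSet_eq_fun (measurable_pi_apply i) (measurable_pi_apply j)
  have hDm : MeasurableSet D := by
    have := hcompm.compl; rwa [compl_compl] at this
  have hνDc : ν Dᶜ = 0 := by
    rw [hνdef, Measure.map_apply hTm hcompm, hcomp]
    exact hdist
  have hνD : ν D = 1 := by
    have h1 : ν Set.univ ≤ ν D + ν Dᶜ := by
      nth_rewrite 1 [← Set.union_compl_self D]
      exact measure_union_le D Dᶜ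
    rw [measure_univ, hνDc, add_zero] at h1
    exact le_antisymm prob_le_one h1
  -- uniformity of the rank of the last coordinate
  have huni : ∀ k, k < M + 1 → ν (B (Fin.last M) k) = (((M:ℕ) + 1 : ℕ) : ℝ≥0∞)⁻¹ := by
    intro k hk
    have hdisj : ∀ j ∈ (Finset.univ : Finset (Fin (M+1))), ∀ j' ∈ Finset.univ, j ≠ j' →
        Disjoint (B j k ∩ D) (B j' k ∩ D) := by
      intro j _ j' _ hjj'
      refine Set.disjoint_left.2 ?_
      rintro v ⟨hvj, hvD⟩ ⟨hvj', _⟩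
      exact hjj' (rnk_inj hvD (hvj.trans hvj'.symm))
    have hcover : ⋃ j ∈ (Finset.univ : Finset (Fin (M+1))), (B j k ∩ D) = D := by
      ext v
      simp only [Set.mem_iUnion, Finset.mem_univ, Set.mem_inter_iff, exists_prop, true_and,
        hBdef, Set.mem_setOf_eq]
      constructor
      · rintro ⟨j, _, hv⟩; exact hv
      · intro hv
        obtain ⟨j, hj⟩ := rnk_surj hv hk
        exact ⟨j, hj, hv⟩
    have hsum : ∑ j : Fin (M+1), ν (B j k ∩ D) = ν D := by
      rw [← measure_biUnion_finset hdisj (fun j _ => (hBm j k).inter hDm), hcover]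
    have hint : ∀ j : Fin (M+1), ν (B j k ∩ D) = ν (B (Fin.last M) k) := fun j => by
      rw [measure_inter_conull hνDc, hswap]
    rw [hνD, Finset.sum_congr rfl (fun j _ => hint j), Finset.sum_const, Finset.card_univ,
      Fintype.card_fin] at hsum
    have hn0 : (((M:ℕ) + 1 : ℕ) : ℝ≥0∞) ≠ 0 := by
      simp
    have hnt : (((M:ℕ) + 1 : ℕ) : ℝ≥0∞) ≠ ⊤ := ENNReal.natCast_ne_top (M+1)
    calc ν (B (Fin.last M) k)
        = (((M:ℕ)+1:ℕ) : ℝ≥0∞)⁻¹ * ((((M:ℕ)+1:ℕ):ℝ≥0∞) * ν (B (Fin.last M) k)) := by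
          rw [← mul_assoc, ENNReal.inv_mul_cancel hn0 hnt, one_mul]
      _ = (((M:ℕ)+1:ℕ) : ℝ≥0∞)⁻¹ := by rw [← nsmul_eq_mul, hsum, mul_one]
  -- floor facts
  set x := (1 - ε) * ((M : ℝ) + 1) with hx
  set F := (⌊x⌋).toNat with hF
  have hfl1 : 1 ≤ ⌊x⌋ := Int.le_floor.2 (by push_cast; linarith [hq])
  have hflM : ⌊x⌋ ≤ (M : ℤ) := by
    have : ⌊x⌋ < (M : ℤ) + 1 := Int.floor_lt.2 (by push_cast; nlinarith)
    omega
  have hFZ : (F : ℤ) = ⌊x⌋ := Int.toNat_of_nonneg (by omega)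
  have hFM : F ≤ M := by omega
  -- the event as a preimage
  have hsetEq : {ω | (((Finset.univ.filter
          (fun i : Fin M => X i.castSucc ω < X (Fin.last M) ω)).card : ℝ) + 1) / (M + 1)
            ≤ 1 - ε}
      = T ⁻¹' (⋃ k ∈ Finset.range F, B (Fin.last M) k) := by
    ext ω
    simp only [Set.mem_setOf_eq, Set.mem_preimage, Set.mem_iUnion, Finset.mem_range,
      hBdef, exists_prop]
    set c := (Finset.univ.filter
      (fun i : Fin M => X i.castSucc ω < X (Fin.last M) ω)).card with hc
    have hcrnk : rnk (T ω) (Fin.last M) = c := by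
      unfold rnk
      rw [hc]
      rw [Finset.card_filter, Finset.card_filter, Fin.sum_univ_castSucc]
      simp [hTdef]
    have hMpos : (0:ℝ) < (M:ℝ) + 1 := by positivity
    constructor
    · intro h
      refine ⟨c, ?_, hcrnk⟩
      rw [div_le_iff₀ hMpos] at h
      have h2 : (c : ℤ) + 1 ≤ ⌊x⌋ := Int.le_floor.2 (by push_cast; linarith)
      omega
    · rintro ⟨k, hkF, hk⟩
      have hck : c = k := by rw [← hcrnk, hk]
      rw [div_le_iff₀ hMpos]
      have h2 : ((c : ℤ) + 1 : ℝ) ≤ ((⌊x⌋ : ℤ) : ℝ) := by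
        exact_mod_cast (by omega : (c:ℤ) + 1 ≤ ⌊x⌋)
      have h3 : ((⌊x⌋ : ℤ) : ℝ) ≤ x := Int.floor_le x
      push_cast at h2
      linarith
  have hEm : MeasurableSet (⋃ k ∈ Finset.range F, B (Fin.last M) k) :=
    MeasurableSet.biUnion (Finset.range F).countable_toSet (fun k _ => hBm _ k)
  have hμν : μ {ω | (((Finset.univ.filter
          (fun i : Fin M => X i.castSucc ω < X (Fin.last M) ω)).card : ℝ) + 1) / (M + 1)
            ≤ 1 - ε}
      = ν (⋃ k ∈ Finset.range F, B (Fin.last M) k) := by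
    rw [hsetEq, hνdef, Measure.map_apply hTm hEm]
  have hdisj2 : ∀ k ∈ Finset.range F, ∀ k' ∈ Finset.range F, k ≠ k' →
      Disjoint (B (Fin.last M) k) (B (Fin.last M) k') := by
    intro k _ k' _ hkk'
    refine Set.disjoint_left.2 ?_
    intro v hv hv'
    exact hkk' (hv.symm.trans hv')
  have hmeasE : ν (⋃ k ∈ Finset.range F, B (Fin.last M) k)
      = (F : ℝ≥0∞) * (((M:ℕ)+1:ℕ) : ℝ≥0∞)⁻¹ := by
    rw [measure_biUnion_finset hdisj2 (fun k _ => hBm _ k)]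
    rw [Finset.sum_congr rfl (fun k hk => huni k (by
      have := Finset.mem_range.1 hk; omega))]
    rw [Finset.sum_const, Finset.card_range, nsmul_eq_mul]
  have hfrF : ((⌊x⌋ : ℤ) : ℝ) = (F : ℝ) := by exact_mod_cast hFZ.symm
  have hfinal : (F : ℝ≥0∞) * (((M:ℕ)+1:ℕ) : ℝ≥0∞)⁻¹
      = ENNReal.ofReal ((⌊x⌋ : ℝ) / ((M:ℝ) + 1)) := by
    rw [hfrF, ENNReal.ofReal_div_of_pos (by positivity), ENNReal.ofReal_natCast,
      div_eq_mul_inv]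
    congr 1
    rw [show ((M:ℝ)+1) = (((M:ℕ)+1:ℕ):ℝ) by push_cast; ring, ENNReal.ofReal_natCast]
  have hEq : μ {ω | (((Finset.univ.filter
          (fun i : Fin M => X i.castSucc ω < X (Fin.last M) ω)).card : ℝ) + 1) / (M + 1)
            ≤ 1 - ε}
      = ENNReal.ofReal ((⌊x⌋ : ℝ) / ((M:ℝ) + 1)) := by
    rw [hμν, hmeasE, hfinal]
  refine ⟨hEq, ?_⟩
  rw [ge_iff_le, hEq]
  apply ENNReal.ofReal_le_ofReal
  have hMpos : (0:ℝ) < (M:ℝ) + 1 := by positivity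
  rw [le_div_iff₀ hMpos]
  have h1 : x - 1 < ((⌊x⌋ : ℤ) : ℝ) := Int.sub_one_lt_floor x
  have h2 : (1 - ε - 1/((M:ℝ)+1)) * ((M:ℝ)+1) = x - 1 := by
    field_simp [hx]
    rw [hx]
  linarith
end

section
/- Let X₁,...,X_{M+1} be exchangeable real-valued random variables (ties allowed). Let N = #{i ≤ M : X_i < X_{M+1}} and let U be, conditionally on the values, uniform on {0,1,...,#{i ≤ M : X_i = X_{M+1}}}. Then N + U is uniformly distributed on {0,1,...,M}. -/
open MeasureTheory Finset
open scoped ENNReal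

/-!
Given the values `x`, the tie block of the last coordinate occupies the ranks `N, …, N + ties`,
and `U` picks one of them uniformly, so `P(N + U = r) = E[tieBrokenRankProb r X]`. By exchangeability this
expectation does not change when the last coordinate is swapped with any coordinate `j`, so
`(M + 1) P(N + U = r)` is the expectation of `∑ⱼ tieBreakMass X r (X j)`. That sum is `1` for every
`x`: the tie blocks of the distinct values partition `{0, …, M}`, and a block of size `e` is hit by
the `e` coordinates of its value, each with mass `1 / e`.
-/

section TieBreaking

variable {ι α : Type*} [Fintype ι] [LinearOrder α]

def countLT (x : ι → α) (v : α) : ℕ := #{i | x i < v}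

def countEq (x : ι → α) (v : α) : ℕ := #{i | x i = v}

lemma countLT_add_countEq (x : ι → α) (v : α) :
    countLT x v + countEq x v = #{i | x i ≤ v} := by
  classical
  rw [countLT, countEq, ← card_union_of_disjoint (disjoint_filter.2 fun _ _ h => h.ne)]
  congr 1
  ext i
  simp [le_iff_lt_or_eq]

lemma countLT_add_countEq_le_countLT (x : ι → α) {v w : α} (h : v < w) :
    countLT x v + countEq x v ≤ countLT x w := by
  rw [countLT_add_countEq]
  exact card_le_card (monotone_filter_right _ fun _ _ hi => hi.trans_lt h)

lemma countLT_comp_perm (x : ι → α) (σ : Equiv.Perm ι) (v : α) :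
    countLT (x ∘ σ) v = countLT x v := by
  simp only [countLT, card_filter, Function.comp_apply]
  exact Equiv.sum_comp σ (fun i => if x i < v then 1 else 0)

lemma countEq_comp_perm (x : ι → α) (σ : Equiv.Perm ι) (v : α) :
    countEq (x ∘ σ) v = countEq x v := by
  simp only [countEq, card_filter, Function.comp_apply]
  exact Equiv.sum_comp σ (fun i => if x i = v then 1 else 0)

lemma countEq_apply_ne_zero (x : ι → α) (j : ι) : countEq x (x j) ≠ 0 :=
  card_ne_zero_of_mem (mem_filter.2 ⟨mem_univ j, rfl⟩)

lemma exists_countLT_le_lt_countLT_add_countEq {n : ℕ} (x : Fin n → α) {r : ℕ} (hr : r < n) :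
    ∃ j, countLT x (x j) ≤ r ∧ r < countLT x (x j) + countEq x (x j) := by
  set σ := Tuple.sort x
  have hmono : Monotone (x ∘ σ) := Tuple.monotone_sort x
  refine ⟨σ ⟨r, hr⟩, ?_, ?_⟩
  · calc countLT x (x (σ ⟨r, hr⟩))
        = countLT (x ∘ σ) ((x ∘ σ) ⟨r, hr⟩) := (countLT_comp_perm x σ _).symm
      _ ≤ #(Iio (⟨r, hr⟩ : Fin n)) := card_le_card fun i hi => by
          simp only [mem_filter, mem_univ, true_and] at hi
          exact mem_Iio.2 (hmono.reflect_lt hi)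
      _ = r := Fin.card_Iio _
  · rw [countLT_add_countEq]
    calc r < #(Iic (⟨r, hr⟩ : Fin n)) := by simp
      _ ≤ #{i | (x ∘ σ) i ≤ (x ∘ σ) ⟨r, hr⟩} := card_le_card fun i hi => by
          simpa using hmono (mem_Iic.1 hi)
      _ = #{i | x i ≤ x (σ ⟨r, hr⟩)} := by
          simp only [card_filter, Function.comp_apply]
          exact Equiv.sum_comp σ (fun i => if x i ≤ x (σ ⟨r, hr⟩) then 1 else 0)

lemma eq_of_countLT_le_lt_countLT_add_countEq (x : ι → α) {r : ℕ} {v w : α}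
    (hv : countLT x v ≤ r ∧ r < countLT x v + countEq x v)
    (hw : countLT x w ≤ r ∧ r < countLT x w + countEq x w) : v = w := by
  rcases lt_trichotomy v w with h | h | h
  · have := countLT_add_countEq_le_countLT x h
    omega
  · exact h
  · have := countLT_add_countEq_le_countLT x h
    omega

/-- The `countEq x v` coordinates of value `v` share the ranks
`countLT x v, …, countLT x v + countEq x v - 1`; a uniform tie-break gives each of them mass
`1 / countEq x v` on every rank of this block. -/
noncomputable def tieBreakMass (x : ι → α) (r : ℕ) (v : α) : ℝ≥0∞ :=
  if countLT x v ≤ r ∧ r < countLT x v + countEq x v then (countEq x v : ℝ≥0∞)⁻¹ else 0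

lemma tieBreakMass_comp_perm (x : ι → α) (σ : Equiv.Perm ι) (r : ℕ) :
    tieBreakMass (x ∘ σ) r = tieBreakMass x r := by
  funext v
  simp only [tieBreakMass, countLT_comp_perm, countEq_comp_perm]

lemma countEq_apply_nsmul_tieBreakMass (x : ι → α) (r : ℕ) (j : ι) :
    countEq x (x j) • tieBreakMass x r (x j) =
      if countLT x (x j) ≤ r ∧ r < countLT x (x j) + countEq x (x j) then 1 else 0 := by
  have hne : (countEq x (x j) : ℝ≥0∞) ≠ 0 := by exact_mod_cast countEq_apply_ne_zero x j
  unfold tieBreakMass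
  split_ifs
  · rw [nsmul_eq_mul, ENNReal.mul_inv_cancel hne (ENNReal.natCast_ne_top _)]
  · simp

theorem sum_tieBreakMass_apply {n : ℕ} (x : Fin n → α) {r : ℕ} (hr : r < n) :
    ∑ j, tieBreakMass x r (x j) = 1 := by
  obtain ⟨j, hj⟩ := exists_countLT_le_lt_countLT_add_countEq x hr
  have hblock : {v ∈ univ.image x | countLT x v ≤ r ∧ r < countLT x v + countEq x v} = {x j} :=
    eq_singleton_iff_unique_mem.2 ⟨mem_filter.2 ⟨mem_image_of_mem x (mem_univ j), hj⟩,
      fun v hv => eq_of_countLT_le_lt_countLT_add_countEq x (mem_filter.1 hv).2 hj⟩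
  calc ∑ j, tieBreakMass x r (x j)
      = ∑ v ∈ univ.image x,
          if countLT x v ≤ r ∧ r < countLT x v + countEq x v then 1 else 0 := by
        rw [sum_comp]
        refine sum_congr rfl fun v hv => ?_
        obtain ⟨i, -, rfl⟩ := mem_image.1 hv
        exact countEq_apply_nsmul_tieBreakMass x r i
    _ = 1 := by rw [← sum_filter, hblock, sum_singleton]

end TieBreaking

section LastCoordinate

variable {α : Type*} [LinearOrder α] {M : ℕ}

def rankLast (x : Fin (M + 1) → α) : ℕ := #{i : Fin M | x i.castSucc < x (Fin.last M)}

def tiesLast (x : Fin (M + 1) → α) : ℕ := #{i : Fin M | x i.castSucc = x (Fin.last M)}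

lemma rankLast_eq_countLT (x : Fin (M + 1) → α) : rankLast x = countLT x (x (Fin.last M)) := by
  rw [rankLast, countLT, card_filter, card_filter, Fin.sum_univ_castSucc]
  simp

lemma tiesLast_add_one (x : Fin (M + 1) → α) : tiesLast x + 1 = countEq x (x (Fin.last M)) := by
  rw [tiesLast, countEq, card_filter, card_filter, Fin.sum_univ_castSucc]
  simp

/-- The conditional law of the tie-breaking variable given the values `x`: uniform on
`{0, …, tiesLast x}`. -/
noncomputable def tieBreakWeight (k : ℕ) (x : Fin (M + 1) → α) : ℝ≥0∞ :=
  if k ≤ tiesLast x then ((tiesLast x : ℝ≥0∞) + 1)⁻¹ else 0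

noncomputable def tieBrokenRankProb (r : ℕ) (x : Fin (M + 1) → α) : ℝ≥0∞ :=
  tieBreakMass x r (x (Fin.last M))

lemma tieBrokenRankProb_eq_ite (r : ℕ) (x : Fin (M + 1) → α) :
    tieBrokenRankProb r x = if rankLast x ≤ r then tieBreakWeight (r - rankLast x) x else 0 := by
  rw [tieBrokenRankProb, tieBreakMass, tieBreakWeight, ← rankLast_eq_countLT,
    ← tiesLast_add_one]
  by_cases h : rankLast x ≤ r
  · simp only [h, true_and, if_true, Nat.cast_add, Nat.cast_one]
    exact if_congr (by omega) rfl rfl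
  · simp [h]

lemma tieBrokenRankProb_comp_swap (r : ℕ) (x : Fin (M + 1) → α) (j : Fin (M + 1)) :
    tieBrokenRankProb r (x ∘ Equiv.swap j (Fin.last M)) = tieBreakMass x r (x j) := by
  rw [tieBrokenRankProb, tieBreakMass_comp_perm, Function.comp_apply, Equiv.swap_apply_right]

lemma sum_tieBrokenRankProb_comp_swap {r : ℕ} (hr : r ≤ M) (x : Fin (M + 1) → α) :
    ∑ j, tieBrokenRankProb r (x ∘ Equiv.swap j (Fin.last M)) = 1 := by
  simp only [tieBrokenRankProb_comp_swap]
  exact sum_tieBreakMass_apply x (Nat.lt_succ_of_le hr)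

end LastCoordinate

lemma measurable_card_filter {ι β : Type*} [Fintype ι] [MeasurableSpace β] {p : ι → β → Prop}
    [∀ i b, Decidable (p i b)] (hp : ∀ i, MeasurableSet {b | p i b}) :
    Measurable fun b => #{i | p i b} := by
  simp only [card_filter]
  exact Finset.measurable_sum _ fun i _ => Measurable.ite (hp i) measurable_const measurable_const

lemma measurable_rankLast {M : ℕ} : Measurable (rankLast : (Fin (M + 1) → ℝ) → ℕ) :=
  measurable_card_filter fun _ => measurableSet_lt (measurable_pi_apply _) (measurable_pi_apply _)

lemma measurable_tiesLast {M : ℕ} : Measurable (tiesLast : (Fin (M + 1) → ℝ) → ℕ) :=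
  measurable_card_filter fun _ =>
    measurableSet_eq_fun (measurable_pi_apply _) (measurable_pi_apply _)

lemma measurable_tieBrokenRankProb {M : ℕ} (r : ℕ) :
    Measurable (tieBrokenRankProb r : (Fin (M + 1) → ℝ) → ℝ≥0∞) := by
  simp only [funext (tieBrokenRankProb_eq_ite r), tieBreakWeight]
  exact (Measurable.of_discrete (α := ℕ × ℕ) (f := fun c => if c.1 ≤ r then
    if r - c.1 ≤ c.2 then ((c.2 : ℝ≥0∞) + 1)⁻¹ else 0 else 0)).comp
    (measurable_rankLast.prodMk measurable_tiesLast)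

section Probability

variable {Ω β : Type*} [MeasurableSpace Ω] [MeasurableSpace β]

lemma measurable_precomp {ι κ : Type*} (f : κ → ι) : Measurable fun x : ι → β => x ∘ f :=
  measurable_pi_lambda _ fun i => measurable_pi_apply (f i)

lemma measure_eq_comp_inter_preimage {μ : Measure Ω} {U : Ω → ℕ} {V : Ω → β}
    (hU : Measurable U) (hV : Measurable V) {p : ℕ → β → ℝ≥0∞}
    (hcond : ∀ (k : ℕ) (A : Set β), MeasurableSet A →
      μ ({ω | U ω = k} ∩ V ⁻¹' A) = ∫⁻ ω in V ⁻¹' A, p k (V ω) ∂μ)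
    {f : β → ℕ} (hf : Measurable f) {B : Set β} (hB : MeasurableSet B) :
    μ ({ω | U ω = f (V ω)} ∩ V ⁻¹' B) = ∫⁻ ω in V ⁻¹' B, p (f (V ω)) (V ω) ∂μ := by
  set S : ℕ → Set Ω := fun k => V ⁻¹' (B ∩ f ⁻¹' {k})
  have hS : ∀ k, MeasurableSet (S k) := fun k => hV (hB.inter (hf (measurableSet_singleton k)))
  have hdisj : Pairwise (Function.onFun Disjoint S) := fun k l hkl =>
    Set.disjoint_left.2 fun ω hk hl => hkl (hk.2.symm.trans hl.2)
  calc μ ({ω | U ω = f (V ω)} ∩ V ⁻¹' B)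
      = μ (⋃ k, {ω | U ω = k} ∩ S k) := by
        congr 1
        ext ω
        simp [S, eq_comm, and_comm]
    _ = ∑' k, μ ({ω | U ω = k} ∩ S k) :=
        measure_iUnion (fun k l hkl => (hdisj hkl).mono Set.inter_subset_right
          Set.inter_subset_right) fun k => (hU (measurableSet_singleton k)).inter (hS k)
    _ = ∑' k, ∫⁻ ω in S k, p (f (V ω)) (V ω) ∂μ := by
        refine tsum_congr fun k => (hcond k _ (hB.inter (hf (measurableSet_singleton k)))).trans ?_
        exact setLIntegral_congr_fun (hS k) fun ω hω => by rw [hω.2]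
    _ = ∫⁻ ω in V ⁻¹' B, p (f (V ω)) (V ω) ∂μ := by
        rw [← lintegral_iUnion hS hdisj]
        congr 2
        ext ω
        simp [S]

lemma card_mul_lintegral_eq_of_sum_comp_perm {ι κ : Type*} [Fintype κ] (ν : Measure (ι → β))
    [IsProbabilityMeasure ν] (τ : κ → Equiv.Perm ι)
    (hν : ∀ k, ν.map (fun x => x ∘ τ k) = ν) {g : (ι → β) → ℝ≥0∞} (hg : Measurable g) {c : ℝ≥0∞}
    (hsum : ∀ x, ∑ k, g (x ∘ τ k) = c) :
    Fintype.card κ * ∫⁻ x, g x ∂ν = c := by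
  calc Fintype.card κ * ∫⁻ x, g x ∂ν = ∑ k, ∫⁻ x, g (x ∘ τ k) ∂ν := by
        rw [← nsmul_eq_mul, ← card_univ, ← sum_const]
        refine sum_congr rfl fun k _ => ?_
        rw [← lintegral_map hg (measurable_precomp _), hν]
    _ = ∫⁻ x, ∑ k, g (x ∘ τ k) ∂ν :=
        (lintegral_finsetSum _ fun k _ => hg.comp (measurable_precomp _)).symm
    _ = c := by simp [hsum]

end Probability

theorem stmt_14_general {Ω : Type*} [MeasurableSpace Ω] (μ : Measure Ω) [IsProbabilityMeasure μ]
    (M : ℕ) (X : Fin (M + 1) → Ω → ℝ) (U : Ω → ℕ)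
    (hmeas : ∀ i, Measurable (X i)) (hU : Measurable U)
    (hexch : ∀ σ : Equiv.Perm (Fin (M + 1)),
      Measure.map (fun ω => fun i => X (σ i) ω) μ = Measure.map (fun ω => fun i => X i ω) μ)
    -- `U` is uniform on `{0, ..., ties}` conditionally on the values `(X i)_i`:
    (hUcond : ∀ (k : ℕ) (A : Set (Fin (M + 1) → ℝ)), MeasurableSet A →
      μ ({ω | U ω = k} ∩ {ω | (fun i => X i ω) ∈ A})
        = ∫⁻ ω in {ω | (fun i => X i ω) ∈ A},
            (if k ≤ (Finset.univ.filter
                (fun i : Fin M => X i.castSucc ω = X (Fin.last M) ω)).card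
              then (((Finset.univ.filter
                (fun i : Fin M => X i.castSucc ω = X (Fin.last M) ω)).card : ℝ≥0∞) + 1)⁻¹
              else 0) ∂μ) :
    ∀ r : ℕ, r ≤ M →
      μ {ω | (Finset.univ.filter
            (fun i : Fin M => X i.castSucc ω < X (Fin.last M) ω)).card + U ω = r}
        = 1 / (M + 1) := by
  intro r hr
  set V : Ω → Fin (M + 1) → ℝ := fun ω i => X i ω
  have hV : Measurable V := measurable_pi_lambda _ hmeas
  have hevent : {ω | rankLast (V ω) + U ω = r}
      = {ω | U ω = r - rankLast (V ω)} ∩ V ⁻¹' {x | rankLast x ≤ r} := by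
    ext ω
    simp only [Set.mem_ofPred_eq, Set.mem_inter_iff, Set.mem_preimage]
    omega
  have hB : MeasurableSet {x : Fin (M + 1) → ℝ | rankLast x ≤ r} :=
    measurableSet_le measurable_rankLast measurable_const
  have hprob : μ {ω | rankLast (V ω) + U ω = r} = ∫⁻ x, tieBrokenRankProb r x ∂μ.map V := by
    rw [hevent, measure_eq_comp_inter_preimage (p := tieBreakWeight)
      (f := fun x => r - rankLast x) hU hV hUcond
      (Measurable.of_discrete.comp measurable_rankLast) hB,
      lintegral_map (measurable_tieBrokenRankProb r) hV, ← lintegral_indicator (hV hB)]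
    simp only [tieBrokenRankProb_eq_ite, Set.indicator, Set.mem_preimage, Set.mem_ofPred_eq]
  have hinv : ∀ j, (μ.map V).map (fun x => x ∘ Equiv.swap j (Fin.last M)) = μ.map V := fun j => by
    rw [Measure.map_map (measurable_precomp _) hV]
    exact hexch _
  have := Measure.isProbabilityMeasure_map (μ := μ) hV.aemeasurable
  have hmass := card_mul_lintegral_eq_of_sum_comp_perm (μ.map V) _ hinv
    (measurable_tieBrokenRankProb r) (sum_tieBrokenRankProb_comp_swap hr)
  rw [Fintype.card_fin, Nat.cast_add, Nat.cast_one] at hmass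
  change μ {ω | rankLast (V ω) + U ω = r} = _
  rw [hprob, ENNReal.eq_div_iff (by simp) (by simp), hmass]

/-- Tie-broken rank uniformity: let `X 0, ..., X M` be exchangeable real random
variables (ties allowed), `N = #{i < M : X i < X M}`,
`ties = #{i < M : X i = X M}`, and let `U` be, conditionally on the values
`(X 0, ..., X M)`, uniform on `{0,...,ties}`. Then `N + U` is uniform on
`{0,...,M}`. -/
theorem stmt_14 {Ω : Type*} [MeasurableSpace Ω] (μ : Measure Ω) [IsProbabilityMeasure μ]
    (M : ℕ) (hM : 0 < M) (X : Fin (M + 1) → Ω → ℝ) (U : Ω → ℕ)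
    (hmeas : ∀ i, Measurable (X i)) (hU : Measurable U)
    (hexch : ∀ σ : Equiv.Perm (Fin (M + 1)),
      Measure.map (fun ω => fun i => X (σ i) ω) μ = Measure.map (fun ω => fun i => X i ω) μ)
    -- `U` is uniform on `{0, ..., ties}` conditionally on the values `(X i)_i`:
    (hUcond : ∀ (k : ℕ) (A : Set (Fin (M + 1) → ℝ)), MeasurableSet A →
      μ ({ω | U ω = k} ∩ {ω | (fun i => X i ω) ∈ A})
        = ∫⁻ ω in {ω | (fun i => X i ω) ∈ A},
            (if k ≤ (Finset.univ.filter
                (fun i : Fin M => X i.castSucc ω = X (Fin.last M) ω)).card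
              then (((Finset.univ.filter
                (fun i : Fin M => X i.castSucc ω = X (Fin.last M) ω)).card : ℝ≥0∞) + 1)⁻¹
              else 0) ∂μ) :
    ∀ r : ℕ, r ≤ M →
      μ {ω | (Finset.univ.filter
            (fun i : Fin M => X i.castSucc ω < X (Fin.last M) ω)).card + U ω = r}
        = 1 / (M + 1) :=
  stmt_14_general μ M X U hmeas hU hexch hUcond
end
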